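/- arXiv:2101.07547 — 6 statements merged into one kernel-verified Lean document; each statement's English description precedes it below -/
import Mathlib

section
/- For p = 3, the characteristic polynomials P_n of the adjacency matrices A_n of the finite Schreier graphs of the star automaton group 𝒢_{S_3} satisfy: P_1(λ) = (λ − 6)(λ + 2)(λ − 4)², and for every n ≥ 1, P_{n+1}(λ) = (λ − 4)^{2·4^n} · P_n(λ² − 4λ − 6); that is, in ℝ[X], P_{n+1} = (X − 4)^{2·4^n} · (P_n composed with X² − 4X − 6). -/
/-!
Sort the words of length `n + 1` by their first letter, the words `0w` first. Since `e_i` sends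
`0w` to `i e_i(w)` and `iw` to `0w` and fixes all other words, in this order
`A_{n+1} = [[0, B], [Bᵀ, 2(p-1) I]]` with `B = [M_1 + I | ⋯ | M_p + I]`, and as the `M_i` are
permutation matrices, `B Bᵀ = 2p I + A_n`. The Schur complement of the scalar block then gives
`P_{n+1}(λ) = (λ - c)^{(p-1)(p+1)^n} P_n(λ² - cλ - 2p)` with `c = 2(p-1)`, for every `p ≥ 1`.
-/

open Polynomial Matrix

/-- The action of the generator `e_i` of the star automaton group `𝒢_{S_p}` on
words of length `n` over the alphabet `X = {0, 1, …, p}`. -/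
def starWord (p : ℕ) (i : Fin (p + 1)) : (n : ℕ) → (Fin n → Fin (p + 1)) → Fin n → Fin (p + 1)
  | 0, w => w
  | n + 1, w =>
    if w 0 = 0 then Fin.cons i (starWord p i n (Fin.tail w))
    else if w 0 = i then Fin.cons 0 (Fin.tail w)
    else w

/-- The real permutation matrix of `e_i^{(n)}`. -/
noncomputable def starMat (p n : ℕ) (i : Fin (p + 1)) :
    Matrix (Fin n → Fin (p + 1)) (Fin n → Fin (p + 1)) ℝ :=
  fun u v => if starWord p i n u = v then 1 else 0

/-- The adjacency matrix `A_n = Σ_{i=1}^p (M_{i,n} + M_{i,n}ᵀ)` of the `n`-th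
Schreier graph of the star automaton group `𝒢_{S_p}`. -/
noncomputable def starAdj (p n : ℕ) :
    Matrix (Fin n → Fin (p + 1)) (Fin n → Fin (p + 1)) ℝ :=
  ∑ i : Fin p, (starMat p n i.succ + (starMat p n i.succ)ᵀ)

section SchurComplement

variable {R : Type*} [CommRing R] {m k : Type*} [Fintype m] [DecidableEq m] [Fintype k]
  [DecidableEq k]

theorem Matrix.charpoly_comp_eq_det (A : Matrix m m R) (q : R[X]) :
    A.charpoly.comp q = det (scalar m q - A.map C) := by
  rw [← eval_charpoly, charpoly_map, eval_map]
  rfl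

-- Multiplying by `d ^ card m` replaces the inverse of the scalar block `d • 1`, so that no
-- invertibility is needed.
theorem Matrix.det_fromBlocks_scalar_mul_pow (a d : R) (B : Matrix m k R) (B' : Matrix k m R) :
    det (fromBlocks (scalar m a) B B' (scalar k d)) * d ^ Fintype.card m =
      det (scalar m (a * d) - B * B') * d ^ Fintype.card k := by
  have hprod : fromBlocks (scalar m a) B B' (scalar k d) * fromBlocks (scalar m d) 0 (-B') 1 =
      fromBlocks (scalar m (a * d) - B * B') B 0 (scalar k d) := by
    rw [fromBlocks_multiply]
    congr 1 <;> ext <;> simp [sub_eq_add_neg, scalar_apply, mul_comm]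
  have hdet : det (fromBlocks (scalar m d) 0 (-B') (1 : Matrix k k R)) = d ^ Fintype.card m := by
    simp
  rw [← hdet, ← det_mul, hprod, det_fromBlocks_zero₂₁]
  simp

theorem Matrix.charpoly_fromBlocks_zero_scalar_mul_pow (B : Matrix m k R) (B' : Matrix k m R)
    (c : R) :
    (fromBlocks 0 B B' (scalar k c)).charpoly * (X - C c) ^ Fintype.card m =
      det (scalar m (X * (X - C c)) - (B * B').map C) * (X - C c) ^ Fintype.card k := by
  have hc : charmatrix (scalar k c) = scalar k (X - C c) := by
    simp [charmatrix, scalar_apply]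
  rw [charpoly, charmatrix_fromBlocks, hc, charmatrix, map_zero, sub_zero,
    det_fromBlocks_scalar_mul_pow, Matrix.neg_mul, Matrix.mul_neg, neg_neg, Matrix.map_mul]

end SchurComplement

section StarGraph

variable {p : ℕ}

theorem starWord_cons (i : Fin (p + 1)) (n : ℕ) (x : Fin (p + 1)) (w : Fin n → Fin (p + 1)) :
    starWord p i (n + 1) (Fin.cons x w) =
      Fin.cons (Equiv.swap 0 i x) (if x = 0 then starWord p i n w else w) := by
  by_cases h0 : x = 0
  · subst h0
    simp [starWord]
  · by_cases hi : x = i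
    · subst hi
      simp [starWord, h0]
    · simp [starWord, h0, hi, Equiv.swap_apply_of_ne_of_ne h0 hi]

theorem starWord_injective (i : Fin (p + 1)) (n : ℕ) : Function.Injective (starWord p i n) := by
  induction n with
  | zero => exact fun u v _ => Subsingleton.elim u v
  | succ n ih =>
    intro u v h
    rw [← Fin.cons_self_tail u, ← Fin.cons_self_tail v, starWord_cons, starWord_cons,
      Fin.cons_inj] at h
    obtain ⟨hhead, htail⟩ := h
    have hx : u 0 = v 0 := (Equiv.swap 0 i).injective hhead
    rw [← hx] at htail
    rw [← Fin.cons_self_tail u, ← Fin.cons_self_tail v, hx]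
    split_ifs at htail
    · rw [ih htail]
    · rw [htail]

theorem starMat_mul_transpose (n : ℕ) (i : Fin (p + 1)) :
    starMat p n i * (starMat p n i)ᵀ = 1 := by
  ext u v
  simp [mul_apply, starMat, one_apply, (starWord_injective i n).eq_iff]

theorem starMat_cons_cons (n : ℕ) (i x y : Fin (p + 1)) (u v : Fin n → Fin (p + 1)) :
    starMat p (n + 1) i (Fin.cons x u) (Fin.cons y v) =
      if Equiv.swap 0 i x = y then (if x = 0 then starMat p n i u v else (1 : Matrix _ _ ℝ) u v)
      else 0 := by
  simp only [starMat, starWord_cons, Fin.cons_inj, one_apply]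
  split_ifs <;> simp_all

theorem starMat_cons_cons_of_ne_zero (n : ℕ) (i : Fin (p + 1)) {x y : Fin (p + 1)} (hx : x ≠ 0)
    (hy : y ≠ 0) (u v : Fin n → Fin (p + 1)) :
    starMat p (n + 1) i (Fin.cons x u) (Fin.cons y v) =
      if x ≠ i ∧ x = y then (1 : Matrix _ _ ℝ) u v else 0 := by
  rw [starMat_cons_cons]
  by_cases hi : x = i
  · subst hi
    simp [hy.symm]
  · simp [Equiv.swap_apply_of_ne_of_ne hx hi, hi, hx]

theorem starAdj_apply (n : ℕ) (u v : Fin n → Fin (p + 1)) :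
    starAdj p n u v = ∑ i : Fin p, (starMat p n i.succ u v + starMat p n i.succ v u) := by
  simp [starAdj, Matrix.sum_apply]

theorem starAdj_transpose (n : ℕ) : (starAdj p n)ᵀ = starAdj p n := by
  simp [starAdj, transpose_sum, add_comm]

def wordConsEquiv (p n : ℕ) :
    (Fin n → Fin (p + 1)) ⊕ Fin p × (Fin n → Fin (p + 1)) ≃ (Fin (n + 1) → Fin (p + 1))
    where
  toFun
    | .inl w => Fin.cons 0 w
    | .inr (i, w) => Fin.cons i.succ w
  invFun u := if h : u 0 = 0 then .inl (Fin.tail u) else .inr ((u 0).pred h, Fin.tail u)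
  left_inv := by
    rintro (w | ⟨i, w⟩) <;> simp [Fin.succ_ne_zero]
  right_inv u := by
    by_cases h : u 0 = 0
    · simp only [h, dif_pos]
      rw [← h, Fin.cons_self_tail]
    · simp only [h, dif_neg, not_false_iff]
      rw [Fin.succ_pred, Fin.cons_self_tail]

noncomputable def starBlock (p n : ℕ) :
    Matrix (Fin n → Fin (p + 1)) (Fin p × (Fin n → Fin (p + 1))) ℝ :=
  Matrix.of fun u iv => (starMat p n iv.1.succ + 1) u iv.2

theorem starBlock_mul_transpose (n : ℕ) :
    starBlock p n * (starBlock p n)ᵀ = scalar _ (2 * p : ℝ) + starAdj p n := by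
  have hsq (i : Fin (p + 1)) : (starMat p n i + 1) * (starMat p n i + 1)ᵀ =
      1 + 1 + (starMat p n i + (starMat p n i)ᵀ) := by
    rw [transpose_add, transpose_one, add_mul, mul_add, mul_add, starMat_mul_transpose, mul_one,
      one_mul, one_mul]
    abel
  ext u v
  have hrow (i : Fin p) : ∑ w, starBlock p n u (i, w) * (starBlock p n)ᵀ (i, w) v =
      ((starMat p n i.succ + 1) * (starMat p n i.succ + 1)ᵀ : Matrix _ _ ℝ) u v :=
    rfl
  rw [mul_apply, Fintype.sum_prod_type]
  simp only [hrow, hsq]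
  by_cases h : u = v <;>
    simp [starAdj, Matrix.sum_apply, Finset.sum_add_distrib, one_apply, h, two_mul]

theorem starAdj_cons_zero_cons_zero (n : ℕ) (u v : Fin n → Fin (p + 1)) :
    starAdj p (n + 1) (Fin.cons 0 u) (Fin.cons 0 v) = 0 := by
  simp [starAdj_apply, starMat_cons_cons, Fin.succ_ne_zero]

theorem starAdj_cons_zero_cons_succ (n : ℕ) (u v : Fin n → Fin (p + 1)) (j : Fin p) :
    starAdj p (n + 1) (Fin.cons 0 u) (Fin.cons j.succ v) = starBlock p n u (j, v) := by
  simp only [starAdj_apply, starMat_cons_cons, Equiv.swap_apply_eq_iff, Equiv.swap_apply_left,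
    Fin.succ_inj]
  simp [Fin.succ_ne_zero, starBlock, Finset.sum_add_distrib, one_apply, eq_comm]

theorem starAdj_cons_succ_cons_succ (n : ℕ) (u v : Fin n → Fin (p + 1)) (i j : Fin p) :
    starAdj p (n + 1) (Fin.cons i.succ u) (Fin.cons j.succ v) =
      scalar _ (2 * (p - 1) : ℝ) (i, u) (j, v) := by
  simp only [starAdj_apply, Fin.succ_inj,
    starMat_cons_cons_of_ne_zero _ _ (Fin.succ_ne_zero _) (Fin.succ_ne_zero _)]
  by_cases h : i = j ∧ u = v
  · obtain ⟨rfl, rfl⟩ := h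
    simp [Finset.sum_add_distrib, Finset.sum_ite, Finset.filter_ne, Nat.cast_sub i.pos, two_mul]
  · by_cases hij : i = j
    · subst hij
      have huv : u ≠ v := fun huv => h ⟨rfl, huv⟩
      simp [one_apply, huv, Ne.symm huv]
    · simp [hij, Ne.symm hij]

theorem starAdj_succ_submatrix (n : ℕ) :
    (starAdj p (n + 1)).submatrix (wordConsEquiv p n) (wordConsEquiv p n) =
      fromBlocks 0 (starBlock p n) (starBlock p n)ᵀ (scalar _ (2 * (p - 1) : ℝ)) := by
  ext (u | ⟨i, u⟩) (v | ⟨j, v⟩)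
  · exact starAdj_cons_zero_cons_zero n u v
  · exact starAdj_cons_zero_cons_succ n u v j
  · rw [← starAdj_transpose]
    exact starAdj_cons_zero_cons_succ n v u i
  · exact starAdj_cons_succ_cons_succ n u v i j

theorem charpoly_starAdj_succ (hp : 1 ≤ p) (n : ℕ) :
    (starAdj p (n + 1)).charpoly =
      (X - C (2 * (p - 1) : ℝ)) ^ ((p - 1) * (p + 1) ^ n) *
        (starAdj p n).charpoly.comp (X ^ 2 - C (2 * (p - 1) : ℝ) * X - C (2 * p : ℝ)) := by
  set c : ℝ := 2 * (p - 1)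
  have hreindex : (starAdj p (n + 1)).charpoly =
      (fromBlocks 0 (starBlock p n) (starBlock p n)ᵀ (scalar _ c)).charpoly := by
    rw [← charpoly_reindex (wordConsEquiv p n).symm, reindex_apply, Equiv.symm_symm,
      starAdj_succ_submatrix]
  have hschur : det (scalar _ (X * (X - C c)) - (starBlock p n * (starBlock p n)ᵀ).map C) =
      (starAdj p n).charpoly.comp (X ^ 2 - C c * X - C (2 * p : ℝ)) := by
    rw [charpoly_comp_eq_det, starBlock_mul_transpose]
    congr 1
    ext u v : 1
    by_cases h : u = v
    · simp [h]
      ring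
    · simp [h]
  have hcard : Fintype.card (Fin p × (Fin n → Fin (p + 1))) =
      (p - 1) * (p + 1) ^ n + Fintype.card (Fin n → Fin (p + 1)) := by
    simp only [Fintype.card_prod, Fintype.card_fin, Fintype.card_fun]
    rw [← add_one_mul, Nat.sub_add_cancel hp]
  have h := charpoly_fromBlocks_zero_scalar_mul_pow (starBlock p n) (starBlock p n)ᵀ c
  rw [← hreindex, hschur, hcard, pow_add, ← mul_assoc] at h
  rw [mul_right_cancel₀ (pow_ne_zero _ (X_sub_C_ne_zero c)) h, mul_comm]

theorem charpoly_starAdj_zero : (starAdj p 0).charpoly = X - C (2 * p : ℝ) := by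
  have h : starAdj p 0 = scalar _ (2 * p : ℝ) := by
    ext u v : 1
    obtain rfl := Subsingleton.elim u v
    simp [starAdj_apply, starMat, starWord, two_mul]
  simp [h, scalar_apply, charpoly_diagonal]

end StarGraph

/-- For `p = 3`: `P_1(λ) = (λ − 6)(λ + 2)(λ − 4)²` and
`P_{n+1}(λ) = (λ − 4)^{2·4^n} · P_n(λ² − 4λ − 6)` for every `n ≥ 1`. -/
theorem stmt0 :
    (starAdj 3 1).charpoly = (X - C 6) * (X + C 2) * (X - C 4) ^ 2 ∧
    ∀ n : ℕ, 1 ≤ n →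
      (starAdj 3 (n + 1)).charpoly =
        (X - C 4) ^ (2 * 4 ^ n) *
          ((starAdj 3 n).charpoly.comp (X ^ 2 - C 4 * X - C 6)) := by
  have hrec (n : ℕ) := charpoly_starAdj_succ (p := 3) (by norm_num) n
  have h0 := charpoly_starAdj_zero (p := 3)
  norm_num at hrec h0
  refine ⟨?_, fun n _ => hrec n⟩
  rw [hrec, h0, sub_comp, X_comp, C_comp]
  simp only [map_ofNat]
  ring
end

section
/- For every integer p ≥ 1 and every n ≥ 1, the preimage of 2p under the n-th iterate of f_p decomposes as the disjoint union {λ ∈ ℝ : f_p^{∘n}(λ) = 2p} = {2p} ⊔ ⨆_{i=0}^{n−1} {λ ∈ ℝ : f_p^{∘i}(λ) = −2}; in particular the sets {2p} and {λ : f_p^{∘i}(λ) = −2} for 0 ≤ i ≤ n−1 are pairwise disjoint and their union is (f_p^{∘n})^{-1}({2p}). -/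
noncomputable def fp (p : ℕ) : ℝ → ℝ := fun x => x ^ 2 - 2 * ((p : ℝ) - 1) * x - 2 * p

lemma fp_root (p : ℕ) (x : ℝ) : fp p x = 2 * p ↔ x = 2 * p ∨ x = -2 := by
  constructor
  · intro h
    have h2 : (x - 2 * p) * (x + 2) = 0 := by
      simp only [fp] at h; linear_combination h
    rcases mul_eq_zero.1 h2 with h | h
    · left; linarith
    · right; linarith
  · rintro (rfl | rfl) <;> simp only [fp] <;> ring

lemma fp_fix (p : ℕ) : fp p (2 * p) = 2 * p := by simp only [fp]; ring

lemma iter_fix (p i : ℕ) : (fp p)^[i] (2 * p) = 2 * p := by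
  induction i with
  | zero => simp
  | succ k ih => rw [Function.iterate_succ_apply, fp_fix, ih]

lemma iter_neg2 (p : ℕ) (i : ℕ) (hi : 1 ≤ i) : (fp p)^[i] (-2 : ℝ) = 2 * p := by
  obtain ⟨k, rfl⟩ := Nat.exists_eq_add_of_le hi
  rw [add_comm, Function.iterate_succ_apply]
  have : fp p (-2) = 2 * p := by simp only [fp]; ring
  rw [this, iter_fix]

lemma two_p_ne (p : ℕ) (hp : 1 ≤ p) : (2 * (p : ℝ)) ≠ -2 := by
  have : (1 : ℝ) ≤ p := by exact_mod_cast hp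
  intro h; linarith

lemma main_eq (p n : ℕ) (hn : 1 ≤ n) :
    {lam : ℝ | (fp p)^[n] lam = 2 * p} =
      {(2 * (p : ℝ))} ∪ ⋃ i < n, {lam : ℝ | (fp p)^[i] lam = -2} := by
  induction n, hn using Nat.le_induction with
  | base =>
    ext x
    simp only [Set.mem_setOf_eq, Function.iterate_one, Set.mem_union, Set.mem_singleton_iff,
      Set.mem_iUnion, Nat.lt_one_iff]
    rw [fp_root]
    constructor
    · rintro (h | h)
      · exact Or.inl h
      · exact Or.inr ⟨0, rfl, by simpa using h⟩
    · rintro (h | ⟨i, rfl, h⟩)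
      · exact Or.inl h
      · exact Or.inr (by simpa using h)
  | succ m hm ih =>
    ext x
    have : (fp p)^[m + 1] x = 2 * p ↔ (fp p)^[m] x = 2 * p ∨ (fp p)^[m] x = -2 := by
      rw [Function.iterate_succ_apply', fp_root]
    simp only [Set.mem_setOf_eq, this]
    have ih' := Set.ext_iff.1 ih x
    simp only [Set.mem_setOf_eq, Set.mem_union, Set.mem_singleton_iff, Set.mem_iUnion] at ih' ⊢
    constructor
    · rintro (h | h)
      · rcases ih'.1 h with h | ⟨i, hi, h⟩
        · exact Or.inl h
        · exact Or.inr ⟨i, hi.trans (Nat.lt_succ_self m), h⟩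
      · exact Or.inr ⟨m, Nat.lt_succ_self m, h⟩
    · rintro (h | ⟨i, hi, h⟩)
      · exact Or.inl (ih'.2 (Or.inl h))
      · rcases Nat.lt_succ_iff_lt_or_eq.1 hi with hi | rfl
        · exact Or.inl (ih'.2 (Or.inr ⟨i, hi, h⟩))
        · exact Or.inr h

/-- For every `p ≥ 1` and `n ≥ 1`, the preimage of `2p` under `f_p^{∘n}` is the disjoint
union of `{2p}` and the sets `{λ : f_p^{∘i}(λ) = −2}`, `0 ≤ i ≤ n−1`. -/
theorem stmt7 (p : ℕ) (hp : 1 ≤ p) (n : ℕ) (hn : 1 ≤ n) :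
    ({lam : ℝ | (fp p)^[n] lam = 2 * p} =
      {(2 * (p : ℝ))} ∪ ⋃ i < n, {lam : ℝ | (fp p)^[i] lam = -2}) ∧
    (∀ i < n, (2 * (p : ℝ)) ∉ {lam : ℝ | (fp p)^[i] lam = -2}) ∧
    (∀ i < n, ∀ j < n, i ≠ j →
      Disjoint {lam : ℝ | (fp p)^[i] lam = -2} {lam : ℝ | (fp p)^[j] lam = -2}) := by
  refine ⟨main_eq p n hn, ?_, ?_⟩
  · intro i _ h
    simp only [Set.mem_setOf_eq, iter_fix] at h
    exact two_p_ne p hp h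
  · have key : ∀ i j, i < j → ∀ x : ℝ, (fp p)^[i] x = -2 → (fp p)^[j] x ≠ -2 := by
      intro i j hij x hx
      obtain ⟨k, rfl⟩ := Nat.exists_eq_add_of_lt hij
      rw [show i + k + 1 = (k + 1) + i by ring, Function.iterate_add_apply, hx,
        iter_neg2 p _ (Nat.succ_le_succ (Nat.zero_le k))]
      exact two_p_ne p hp
    intro i _ j _ hij
    rw [Set.disjoint_left]
    intro x hx hx'
    rcases Nat.lt_or_ge i j with h | h
    · exact key i j h x hx hx'
    · exact key j i (lt_of_le_of_ne h (Ne.symm hij)) x hx' hx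
end

section
/- Let p ≥ 2 be an integer. Then: (a) the sets {λ ∈ ℝ : f_p^{∘i}(λ) = 2(p−1)}, i ≥ 0, are pairwise disjoint and the i-th one has exactly 2^i elements; (b) the sets {λ ∈ ℝ : f_p^{∘i}(λ) = −2}, i ≥ 0, are pairwise disjoint and the i-th one has exactly 2^i elements. -/
namespace Stmt10Aux

variable {p : ℕ}

lemma bound_step (hp : 2 ≤ p) {x : ℝ} (hx : fp p x ≤ 2 * p) : -2 ≤ x ∧ x ≤ 2 * p := by
  have hp' : (2:ℝ) ≤ p := by exact_mod_cast hp
  have h : (x + 2) * (x - 2 * p) ≤ 0 := by simp only [fp] at hx; nlinarith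
  constructor
  · by_contra hcon
    push_neg at hcon
    nlinarith
  · by_contra hcon
    push_neg at hcon
    nlinarith

lemma invariant (hp : 2 ≤ p) {c : ℝ} (hc1 : -2 ≤ c) (hc2 : c ≤ 2 * p) :
    ∀ i : ℕ, ∀ x : ℝ, (fp p)^[i] x = c → -2 ≤ x ∧ x ≤ 2 * p := by
  intro i
  induction i with
  | zero => intro x hx; simp at hx; subst hx; exact ⟨hc1, hc2⟩
  | succ n ih =>
    intro x hx
    rw [Function.iterate_succ_apply] at hx
    exact bound_step hp (ih _ hx).2

lemma fiber_iff (hp : 2 ≤ p) {s : ℝ} (hs : -2 ≤ s) (x : ℝ) :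
    fp p x = s ↔ x = ((p:ℝ) - 1) - Real.sqrt ((p:ℝ)^2 + 1 + s)
      ∨ x = ((p:ℝ) - 1) + Real.sqrt ((p:ℝ)^2 + 1 + s) := by
  have hp' : (2:ℝ) ≤ p := by exact_mod_cast hp
  have hnn : 0 ≤ (p:ℝ)^2 + 1 + s := by nlinarith
  have hsq : Real.sqrt ((p:ℝ)^2 + 1 + s) ^ 2 = (p:ℝ)^2 + 1 + s := Real.sq_sqrt hnn
  constructor
  · intro h
    simp only [fp] at h
    have hf : (x - (((p:ℝ) - 1) - Real.sqrt ((p:ℝ)^2 + 1 + s)))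
        * (x - (((p:ℝ) - 1) + Real.sqrt ((p:ℝ)^2 + 1 + s))) = 0 := by
      linear_combination h - hsq
    rcases mul_eq_zero.mp hf with h1 | h1
    · left; linarith
    · right; linarith
  · rintro (rfl | rfl) <;> (simp only [fp]; linear_combination hsq)

lemma sqrt_pos' (hp : 2 ≤ p) {s : ℝ} (hs : -2 ≤ s) :
    0 < Real.sqrt ((p:ℝ)^2 + 1 + s) := by
  have hp' : (2:ℝ) ≤ p := by exact_mod_cast hp
  apply Real.sqrt_pos.mpr
  nlinarith

lemma step_set (hp : 2 ≤ p) {c : ℝ} (hc1 : -2 ≤ c) (hc2 : c ≤ 2 * p) (i : ℕ) :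
    {x : ℝ | (fp p)^[i+1] x = c}
      = (fun s => ((p:ℝ)-1) - Real.sqrt ((p:ℝ)^2+1+s)) '' {x : ℝ | (fp p)^[i] x = c}
        ∪ (fun s => ((p:ℝ)-1) + Real.sqrt ((p:ℝ)^2+1+s)) '' {x : ℝ | (fp p)^[i] x = c} := by
  ext x
  simp only [Set.mem_setOf_eq, Set.mem_union, Set.mem_image]
  constructor
  · intro h
    rw [Function.iterate_succ_apply] at h
    have hb := (invariant hp hc1 hc2 i (fp p x) h).1
    rcases (fiber_iff hp hb x).mp rfl with h1 | h1
    · exact Or.inl ⟨fp p x, h, h1.symm⟩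
    · exact Or.inr ⟨fp p x, h, h1.symm⟩
  · rintro (⟨s, hs, rfl⟩ | ⟨s, hs, rfl⟩) <;>
    · have hb := (invariant hp hc1 hc2 i s hs).1
      rw [Function.iterate_succ_apply]
      rw [(fiber_iff hp hb _).mpr (by tauto)]
      exact hs

lemma card_lemma (hp : 2 ≤ p) {c : ℝ} (hc1 : -2 ≤ c) (hc2 : c ≤ 2 * p) :
    ∀ i : ℕ, ({x : ℝ | (fp p)^[i] x = c}).Finite ∧
      Set.ncard {x : ℝ | (fp p)^[i] x = c} = 2 ^ i := by
  intro i
  induction i with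
  | zero =>
    have h0 : {x : ℝ | (fp p)^[0] x = c} = {c} := by
      ext x; simp
    rw [h0]
    exact ⟨Set.finite_singleton c, Set.ncard_singleton c⟩
  | succ n ih =>
    obtain ⟨hfin, hcard⟩ := ih
    rw [step_set hp hc1 hc2 n]
    have hp' : (2:ℝ) ≤ p := by exact_mod_cast hp
    have hinjm : Set.InjOn (fun s => ((p:ℝ)-1) - Real.sqrt ((p:ℝ)^2+1+s))
        {x : ℝ | (fp p)^[n] x = c} := by
      intro s₁ h₁ s₂ h₂ heq
      have hb₁ := (invariant hp hc1 hc2 n s₁ h₁).1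
      have hb₂ := (invariant hp hc1 hc2 n s₂ h₂).1
      have hr : Real.sqrt ((p:ℝ)^2+1+s₁) = Real.sqrt ((p:ℝ)^2+1+s₂) := by
        simp only at heq; linarith
      have h1 : Real.sqrt ((p:ℝ)^2+1+s₁) ^ 2 = (p:ℝ)^2+1+s₁ := Real.sq_sqrt (by nlinarith)
      have h2 : Real.sqrt ((p:ℝ)^2+1+s₂) ^ 2 = (p:ℝ)^2+1+s₂ := Real.sq_sqrt (by nlinarith)
      rw [hr] at h1
      linarith
    have hinjp : Set.InjOn (fun s => ((p:ℝ)-1) + Real.sqrt ((p:ℝ)^2+1+s))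
        {x : ℝ | (fp p)^[n] x = c} := by
      intro s₁ h₁ s₂ h₂ heq
      have hb₁ := (invariant hp hc1 hc2 n s₁ h₁).1
      have hb₂ := (invariant hp hc1 hc2 n s₂ h₂).1
      have hr : Real.sqrt ((p:ℝ)^2+1+s₁) = Real.sqrt ((p:ℝ)^2+1+s₂) := by
        simp only at heq; linarith
      have h1 : Real.sqrt ((p:ℝ)^2+1+s₁) ^ 2 = (p:ℝ)^2+1+s₁ := Real.sq_sqrt (by nlinarith)
      have h2 : Real.sqrt ((p:ℝ)^2+1+s₂) ^ 2 = (p:ℝ)^2+1+s₂ := Real.sq_sqrt (by nlinarith)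
      rw [hr] at h1
      linarith
    have hdisj : Disjoint
        ((fun s => ((p:ℝ)-1) - Real.sqrt ((p:ℝ)^2+1+s)) '' {x : ℝ | (fp p)^[n] x = c})
        ((fun s => ((p:ℝ)-1) + Real.sqrt ((p:ℝ)^2+1+s)) '' {x : ℝ | (fp p)^[n] x = c}) := by
      rw [Set.disjoint_left]
      rintro x ⟨s, hs, rfl⟩ ⟨t, ht, heq⟩
      have hbs := (invariant hp hc1 hc2 n s hs).1
      have hbt := (invariant hp hc1 hc2 n t ht).1
      have h1 := sqrt_pos' hp hbs
      have h2 := sqrt_pos' hp hbt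
      simp only at heq
      linarith
    constructor
    · exact (hfin.image _).union (hfin.image _)
    · rw [Set.ncard_union_eq hdisj (hfin.image _) (hfin.image _),
        Set.ncard_image_of_injOn hinjm, Set.ncard_image_of_injOn hinjp, hcard]
      ring

lemma fixed2p (hp : 2 ≤ p) : fp p (2 * (p:ℝ)) = 2 * p := by
  simp only [fp]; ring

lemma orbit_b (hp : 2 ≤ p) {k : ℕ} (hk : 1 ≤ k) : (fp p)^[k] (-2 : ℝ) = 2 * p := by
  obtain ⟨n, rfl⟩ : ∃ n, k = n + 1 := ⟨k - 1, by omega⟩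
  rw [Function.iterate_succ_apply]
  have h2 : fp p (-2 : ℝ) = 2 * p := by simp only [fp]; ring
  rw [h2]
  exact Function.iterate_fixed (fixed2p hp) n

lemma grow (hp : 2 ≤ p) {x : ℝ} (hx : 2 * p < x) : 2 * p < fp p x := by
  have hp' : (2:ℝ) ≤ p := by exact_mod_cast hp
  simp only [fp]
  nlinarith

lemma orbit_a_big (hp : 2 ≤ p) : ∀ n : ℕ, 2 * (p:ℝ) < (fp p)^[n+2] (2*((p:ℝ)-1)) := by
  have hp' : (2:ℝ) ≤ p := by exact_mod_cast hp
  intro n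
  induction n with
  | zero =>
    have h1 : fp p (2*((p:ℝ)-1)) = -2 * p := by simp only [fp]; ring
    have h2 : fp p (-2 * (p:ℝ)) = 8 * p^2 - 6 * p := by simp only [fp]; ring
    show 2 * (p:ℝ) < (fp p)^[2] (2*((p:ℝ)-1))
    rw [show (2:ℕ) = 1 + 1 from rfl, Function.iterate_add_apply]
    simp only [Function.iterate_one]
    rw [h1, h2]
    nlinarith
  | succ m ih =>
    rw [Function.iterate_succ_apply']
    exact grow hp ih

lemma orbit_a (hp : 2 ≤ p) {k : ℕ} (hk : 1 ≤ k) :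
    (fp p)^[k] (2*((p:ℝ)-1)) ≠ 2*((p:ℝ)-1) := by
  have hp' : (2:ℝ) ≤ p := by exact_mod_cast hp
  rcases eq_or_lt_of_le hk with h | h
  · rw [← h]
    simp only [Function.iterate_one]
    have h1 : fp p (2*((p:ℝ)-1)) = -2 * p := by simp only [fp]; ring
    rw [h1]
    intro hcon
    linarith
  · obtain ⟨n, rfl⟩ : ∃ n, k = n + 2 := ⟨k - 2, by omega⟩
    have := orbit_a_big hp n
    intro hcon
    rw [hcon] at this
    linarith

lemma disjoint_of_lt {c : ℝ} (hnp : ∀ k : ℕ, 1 ≤ k → (fp p)^[k] c ≠ c)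
    {i j : ℕ} (hij : i < j) :
    Disjoint {x : ℝ | (fp p)^[i] x = c} {x : ℝ | (fp p)^[j] x = c} := by
  rw [Set.disjoint_left]
  intro x hx hx'
  simp only [Set.mem_setOf_eq] at hx hx'
  have h : (fp p)^[j - i] ((fp p)^[i] x) = (fp p)^[j] x := by
    rw [← Function.iterate_add_apply]
    congr 1
    omega
  rw [hx, hx'] at h
  exact hnp (j - i) (by omega) h

lemma disjoint_main {c : ℝ} (hnp : ∀ k : ℕ, 1 ≤ k → (fp p)^[k] c ≠ c)
    {i j : ℕ} (hij : i ≠ j) :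
    Disjoint {x : ℝ | (fp p)^[i] x = c} {x : ℝ | (fp p)^[j] x = c} := by
  rcases lt_or_gt_of_ne hij with h | h
  · exact disjoint_of_lt hnp h
  · exact (disjoint_of_lt hnp h).symm

end Stmt10Aux

/-- For `p ≥ 2`: (a) the sets `{λ : f_p^{∘i}(λ) = 2(p−1)}`, `i ≥ 0`, are pairwise disjoint
and the `i`-th has exactly `2^i` elements; (b) likewise for the sets
`{λ : f_p^{∘i}(λ) = −2}`. -/
theorem stmt10 (p : ℕ) (hp : 2 ≤ p) :
    ((∀ i j : ℕ, i ≠ j →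
        Disjoint {lam : ℝ | (fp p)^[i] lam = 2 * ((p : ℝ) - 1)}
          {lam : ℝ | (fp p)^[j] lam = 2 * ((p : ℝ) - 1)}) ∧
      (∀ i : ℕ, Set.ncard {lam : ℝ | (fp p)^[i] lam = 2 * ((p : ℝ) - 1)} = 2 ^ i)) ∧
    ((∀ i j : ℕ, i ≠ j →
        Disjoint {lam : ℝ | (fp p)^[i] lam = -2} {lam : ℝ | (fp p)^[j] lam = -2}) ∧
      (∀ i : ℕ, Set.ncard {lam : ℝ | (fp p)^[i] lam = -2} = 2 ^ i)) := by
  have hp' : (2:ℝ) ≤ p := by exact_mod_cast hp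
  have ha1 : (-2:ℝ) ≤ 2 * ((p:ℝ) - 1) := by linarith
  have ha2 : 2 * ((p:ℝ) - 1) ≤ 2 * p := by linarith
  have hb1 : (-2:ℝ) ≤ -2 := le_refl _
  have hb2 : (-2:ℝ) ≤ 2 * p := by linarith
  refine ⟨⟨fun i j hij => ?_, fun i => ?_⟩, ⟨fun i j hij => ?_, fun i => ?_⟩⟩
  · exact Stmt10Aux.disjoint_main (fun k hk => Stmt10Aux.orbit_a hp hk) hij
  · exact (Stmt10Aux.card_lemma hp ha1 ha2 i).2
  · refine Stmt10Aux.disjoint_main (fun k hk h => ?_) hij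
    have := Stmt10Aux.orbit_b hp hk
    rw [h] at this
    linarith
  · exact (Stmt10Aux.card_lemma hp hb1 hb2 i).2
end

section
/- For p = 3 and every n ≥ 1, the adjacency matrix A_n of the n-th Schreier graph of 𝒢_{S_3} has exactly 2^{n+1} − 1 distinct real eigenvalues (equivalently, its characteristic polynomial has exactly 2^{n+1} − 1 distinct real roots). -/
open Polynomial Matrix

def starInv (p : ℕ) (i : Fin (p + 1)) : (n : ℕ) → (Fin n → Fin (p + 1)) → Fin n → Fin (p + 1)
  | 0, w => w
  | n + 1, w =>
    if w 0 = i then Fin.cons 0 (starInv p i n (Fin.tail w))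
    else if w 0 = 0 then Fin.cons i (Fin.tail w)
    else w


variable {p : ℕ} {i : Fin (p+1)} {n : ℕ}

lemma starWord_zero' (w : Fin (n+1) → Fin (p+1)) (h : w 0 = 0) :
    starWord p i (n+1) w = Fin.cons i (starWord p i n (Fin.tail w)) := by
  rw [starWord, if_pos h]

lemma starWord_eq (w : Fin (n+1) → Fin (p+1)) (hi : i ≠ 0) (h : w 0 = i) :
    starWord p i (n+1) w = Fin.cons 0 (Fin.tail w) := by
  rw [starWord, if_neg (h ▸ hi), if_pos h]

lemma starWord_other (w : Fin (n+1) → Fin (p+1)) (h0 : w 0 ≠ 0) (h1 : w 0 ≠ i) :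
    starWord p i (n+1) w = w := by
  rw [starWord, if_neg h0, if_neg h1]

lemma starInv_eq (w : Fin (n+1) → Fin (p+1)) (h : w 0 = i) :
    starInv p i (n+1) w = Fin.cons 0 (starInv p i n (Fin.tail w)) := by
  rw [starInv, if_pos h]

lemma starInv_zero' (w : Fin (n+1) → Fin (p+1)) (hi : i ≠ 0) (h : w 0 = 0) :
    starInv p i (n+1) w = Fin.cons i (Fin.tail w) := by
  rw [starInv, if_neg (h ▸ (Ne.symm hi)), if_pos h]

lemma starInv_other (w : Fin (n+1) → Fin (p+1)) (h0 : w 0 ≠ 0) (h1 : w 0 ≠ i) :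
    starInv p i (n+1) w = w := by
  rw [starInv, if_neg h1, if_neg h0]

lemma starInv_starWord (hi : i ≠ 0) : ∀ (n : ℕ) (w : Fin n → Fin (p+1)),
    starInv p i n (starWord p i n w) = w := by
  intro n
  induction n with
  | zero => intro w; rfl
  | succ n ih =>
    intro w
    by_cases h0 : w 0 = 0
    · rw [starWord_zero' w h0, starInv_eq _ (by simp), Fin.tail_cons, ih, ← h0,
        Fin.cons_self_tail]
    · by_cases h1 : w 0 = i
      · rw [starWord_eq w hi h1, starInv_zero' _ hi (by simp), Fin.tail_cons, ← h1,
          Fin.cons_self_tail]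
      · rw [starWord_other w h0 h1, starInv_other w h0 h1]

lemma starWord_starInv (hi : i ≠ 0) : ∀ (n : ℕ) (w : Fin n → Fin (p+1)),
    starWord p i n (starInv p i n w) = w := by
  intro n
  induction n with
  | zero => intro w; rfl
  | succ n ih =>
    intro w
    by_cases h1 : w 0 = i
    · rw [starInv_eq w h1, starWord_zero' _ (by simp), Fin.tail_cons, ih, ← h1,
        Fin.cons_self_tail]
    · by_cases h0 : w 0 = 0
      · rw [starInv_zero' w hi h0, starWord_eq _ hi (by simp), Fin.tail_cons, ← h0,
          Fin.cons_self_tail]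
      · rw [starInv_other w h0 h1, starWord_other w h0 h1]


lemma adj_mulVec (v : (Fin n → Fin (p+1)) → ℝ) (u : Fin n → Fin (p+1)) :
    (starAdj p n).mulVec v u
      = ∑ i : Fin p, (v (starWord p i.succ n u) + v (starInv p i.succ n u)) := by
  have hM : ∀ (i : Fin p), (starMat p n i.succ).mulVec v u = v (starWord p i.succ n u) := by
    intro i
    simp [mulVec, dotProduct, starMat, ite_mul, Finset.sum_ite_eq]
  have hMT : ∀ (i : Fin p), ((starMat p n i.succ)ᵀ).mulVec v u = v (starInv p i.succ n u) := by
    intro i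
    have key : ∀ w : Fin n → Fin (p+1), starWord p i.succ n w = u ↔ w = starInv p i.succ n u := by
      intro w
      constructor
      · rintro rfl; rw [starInv_starWord (Fin.succ_ne_zero i)]
      · rintro rfl; rw [starWord_starInv (Fin.succ_ne_zero i)]
    simp only [mulVec, dotProduct, transpose_apply, starMat]
    rw [Finset.sum_congr rfl (fun w _ => by rw [if_congr (key w) rfl rfl])]
    simp [ite_mul, Finset.sum_ite_eq']
  have e1 : ∑ w, (∑ i : Fin p, starMat p n i.succ u w) * v w
      = ∑ i : Fin p, (starMat p n i.succ).mulVec v u := by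
    simp only [mulVec, dotProduct, Finset.sum_mul]; exact Finset.sum_comm ..

  have e2 : ∑ w, (∑ i : Fin p, (starMat p n i.succ)ᵀ u w) * v w
      = ∑ i : Fin p, ((starMat p n i.succ)ᵀ).mulVec v u := by
    simp only [mulVec, dotProduct, Finset.sum_mul]; exact Finset.sum_comm ..

  simp only [starAdj, mulVec, dotProduct, Matrix.sum_apply, Matrix.add_apply, add_mul,
    Finset.sum_add_distrib]
  simp only [mulVec, dotProduct] at e1 e2
  rw [e1, e2]
  simp only [mulVec, dotProduct, Matrix.transpose_apply] at hM hMT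
  simp [hM, hMT]

lemma fin4cases (x : Fin 4) : x = 0 ∨ x = 1 ∨ x = 2 ∨ x = 3 := by revert x; decide

lemma compA {n : ℕ} (v : (Fin (n+1) → Fin 4) → ℝ) (u : Fin (n+1) → Fin 4) :
    (starAdj 3 (n+1)).mulVec v u =
      if u 0 = 0 then
        ∑ i : Fin 3, (v (Fin.cons i.succ (starWord 3 i.succ n (Fin.tail u)))
          + v (Fin.cons i.succ (Fin.tail u)))
      else v (Fin.cons 0 (Fin.tail u)) + v (Fin.cons 0 (starInv 3 (u 0) n (Fin.tail u)))
        + 4 * v u := by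
  rw [adj_mulVec]
  by_cases h : u 0 = 0
  · rw [if_pos h]
    refine Finset.sum_congr rfl (fun i _ => ?_)
    rw [starWord_zero' u h, starInv_zero' u (Fin.succ_ne_zero i) h]
  · rw [if_neg h]
    rcases fin4cases (u 0) with h1 | h1 | h1 | h1
    · exact absurd h1 h
    · rw [Fin.sum_univ_three,
        starWord_eq u (i := (0:Fin 3).succ) (by decide) (by rw [h1]; rfl),
        starInv_eq u (i := (0:Fin 3).succ) (by rw [h1]; rfl),
        starWord_other u (i := (1:Fin 3).succ) h (by rw [h1]; decide),
        starInv_other u (i := (1:Fin 3).succ) h (by rw [h1]; decide),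
        starWord_other u (i := (2:Fin 3).succ) h (by rw [h1]; decide),
        starInv_other u (i := (2:Fin 3).succ) h (by rw [h1]; decide), h1]
      show _ = v (Fin.cons 0 (Fin.tail u)) + v (Fin.cons 0 (starInv 3 1 n (Fin.tail u))) + 4 * v u
      simp only [show Fin.succ (0:Fin 3) = (1:Fin 4) by decide,
        show Fin.succ (1:Fin 3) = (2:Fin 4) by decide,
        show Fin.succ (2:Fin 3) = (3:Fin 4) by decide]
      ring
    · rw [Fin.sum_univ_three,
        starWord_eq u (i := (1:Fin 3).succ) (by decide) (by rw [h1]; rfl),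
        starInv_eq u (i := (1:Fin 3).succ) (by rw [h1]; rfl),
        starWord_other u (i := (0:Fin 3).succ) h (by rw [h1]; decide),
        starInv_other u (i := (0:Fin 3).succ) h (by rw [h1]; decide),
        starWord_other u (i := (2:Fin 3).succ) h (by rw [h1]; decide),
        starInv_other u (i := (2:Fin 3).succ) h (by rw [h1]; decide), h1]
      show _ = v (Fin.cons 0 (Fin.tail u)) + v (Fin.cons 0 (starInv 3 2 n (Fin.tail u))) + 4 * v u
      simp only [show Fin.succ (0:Fin 3) = (1:Fin 4) by decide,
        show Fin.succ (1:Fin 3) = (2:Fin 4) by decide,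
        show Fin.succ (2:Fin 3) = (3:Fin 4) by decide]
      ring
    · rw [Fin.sum_univ_three,
        starWord_eq u (i := (2:Fin 3).succ) (by decide) (by rw [h1]; rfl),
        starInv_eq u (i := (2:Fin 3).succ) (by rw [h1]; rfl),
        starWord_other u (i := (0:Fin 3).succ) h (by rw [h1]; decide),
        starInv_other u (i := (0:Fin 3).succ) h (by rw [h1]; decide),
        starWord_other u (i := (1:Fin 3).succ) h (by rw [h1]; decide),
        starInv_other u (i := (1:Fin 3).succ) h (by rw [h1]; decide), h1]
      show _ = v (Fin.cons 0 (Fin.tail u)) + v (Fin.cons 0 (starInv 3 3 n (Fin.tail u))) + 4 * v u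
      simp only [show Fin.succ (0:Fin 3) = (1:Fin 4) by decide,
        show Fin.succ (1:Fin 3) = (2:Fin 4) by decide,
        show Fin.succ (2:Fin 3) = (3:Fin 4) by decide]
      ring

def Spec (n : ℕ) : Set ℝ :=
  {lam | ∃ v : (Fin n → Fin 4) → ℝ, v ≠ 0 ∧ (starAdj 3 n).mulVec v = lam • v}

lemma exists_ne_zero {α : Type*} {v : α → ℝ} (hv : v ≠ 0) : ∃ u, v u ≠ 0 := by
  by_contra hc; push_neg at hc; exact hv (funext hc)

lemma spec0 : Spec 0 = {6} := by
  have h6 : ∀ (v : (Fin 0 → Fin 4) → ℝ) u, (starAdj 3 0).mulVec v u = 6 * v u := by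
    intro v u
    rw [adj_mulVec]
    show ∑ _i : Fin 3, (v u + v u) = 6 * v u
    rw [Fin.sum_univ_three]; ring
  ext lam
  simp only [Spec, Set.mem_setOf_eq, Set.mem_singleton_iff]
  constructor
  · rintro ⟨v, hv, he⟩
    obtain ⟨u, hu⟩ := exists_ne_zero hv
    have h := congrFun he u
    rw [h6] at h
    have : (6 - lam) * v u = 0 := by
      simp only [Pi.smul_apply, smul_eq_mul] at h; ring_nf; linarith [h]
    rcases mul_eq_zero.1 this with h' | h'
    · linarith
    · exact absurd h' hu
  · rintro rfl
    refine ⟨fun _ => 1, ?_, funext fun u => by rw [h6]; simp⟩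
    intro hc
    exact one_ne_zero (congrFun hc (fun x => x.elim0))

lemma four_mem (n : ℕ) : (4:ℝ) ∈ Spec (n+1) := by
  classical
  set v : (Fin (n+1) → Fin 4) → ℝ :=
    fun u => if u 0 = 1 then 1 else if u 0 = 2 then -1 else 0 with hv
  refine ⟨v, ?_, ?_⟩
  · intro hc
    have := congrFun hc (fun _ => 1)
    simp [hv] at this
  · funext u
    rw [compA]
    by_cases h : u 0 = 0
    · rw [if_pos h]
      have hterm : ∀ (i : Fin 3) (s s' : Fin n → Fin 4),
          v (Fin.cons i.succ s) + v (Fin.cons i.succ s')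
            = (if i.succ = (1:Fin 4) then 2 else if i.succ = 2 then -2 else 0) := by
        intro i s s'
        simp only [hv, Fin.cons_zero]
        split_ifs <;> norm_num
      rw [Fin.sum_univ_three, hterm, hterm, hterm]
      have hval : v u = 0 := by simp [hv, h]
      simp only [Pi.smul_apply, smul_eq_mul, hval, mul_zero]
      norm_num [show ((0:Fin 3).succ : Fin 4) = 1 by decide,
        show ((1:Fin 3).succ : Fin 4) = 2 by decide,
        show ((2:Fin 3).succ : Fin 4) = 3 by decide]
      rw [if_neg (by decide), if_neg (by decide), if_neg (by decide)]
      norm_num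
    · rw [if_neg h]
      have h1 : ∀ s : Fin n → Fin 4, v (Fin.cons 0 s) = 0 := by
        intro s; simp [hv, Fin.cons_zero]
      rw [h1, h1]
      simp only [Pi.smul_apply, smul_eq_mul]; ring

lemma mem_of_pre {n : ℕ} {lam : ℝ} (hl : lam ≠ 4)
    (hm : lam ^ 2 - 4 * lam - 6 ∈ Spec n) : lam ∈ Spec (n+1) := by
  classical
  obtain ⟨w, hw0, hwe⟩ := hm
  have hl4 : lam - 4 ≠ 0 := sub_ne_zero.2 hl
  set V : (Fin (n+1) → Fin 4) → ℝ := fun u =>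
    if u 0 = 0 then w (Fin.tail u)
    else (w (Fin.tail u) + w (starInv 3 (u 0) n (Fin.tail u))) / (lam - 4) with hV
  have hV0 : ∀ s : Fin n → Fin 4, V (Fin.cons 0 s) = w s := by
    intro s; simp [hV, Fin.cons_zero, Fin.tail_cons]
  have hVs : ∀ (i : Fin 3) (s : Fin n → Fin 4),
      V (Fin.cons i.succ s) = (w s + w (starInv 3 i.succ n s)) / (lam - 4) := by
    intro i s
    simp [hV, Fin.cons_zero, Fin.succ_ne_zero, Fin.tail_cons]
  refine ⟨V, ?_, ?_⟩
  · obtain ⟨t, ht⟩ := exists_ne_zero hw0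
    intro hc
    exact ht (by rw [← hV0 t, hc]; rfl)
  · funext u
    rw [compA, Pi.smul_apply, smul_eq_mul]
    by_cases h : u 0 = 0
    · rw [if_pos h]
      have hA := congrFun hwe (Fin.tail u)
      rw [adj_mulVec] at hA
      simp only [Pi.smul_apply, smul_eq_mul] at hA
      have hu : V u = w (Fin.tail u) := by simp [hV, h]
      have hstep : ∀ i : Fin 3,
          V (Fin.cons i.succ (starWord 3 i.succ n (Fin.tail u))) + V (Fin.cons i.succ (Fin.tail u))
            = ((w (starWord 3 i.succ n (Fin.tail u)) + w (starInv 3 i.succ n (Fin.tail u)))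
              + 2 * w (Fin.tail u)) / (lam - 4) := by
        intro i
        rw [hVs, hVs, starInv_starWord (Fin.succ_ne_zero i)]
        ring
      rw [Finset.sum_congr rfl (fun i _ => hstep i), ← Finset.sum_div,
        Finset.sum_add_distrib, hA, Finset.sum_const, hu]
      simp only [Finset.card_univ, Fintype.card_fin, nsmul_eq_mul]
      field_simp
      ring
    · rw [if_neg h, hV0, hV0]
      have hu : V u = (w (Fin.tail u) + w (starInv 3 (u 0) n (Fin.tail u))) / (lam - 4) := by
        simp [hV, h]
      rw [hu]
      field_simp
      ring

lemma pre_of_mem {n : ℕ} {lam : ℝ} (hl : lam ≠ 4) (hm : lam ∈ Spec (n+1)) :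
    lam ^ 2 - 4 * lam - 6 ∈ Spec n := by
  classical
  obtain ⟨V, hV0, hVe⟩ := hm
  have hl4 : lam - 4 ≠ 0 := sub_ne_zero.2 hl
  set w : (Fin n → Fin 4) → ℝ := fun t => V (Fin.cons 0 t) with hw
  have hrel : ∀ u : Fin (n+1) → Fin 4, u 0 ≠ 0 →
      (lam - 4) * V u = w (Fin.tail u) + w (starInv 3 (u 0) n (Fin.tail u)) := by
    intro u hu
    have h := congrFun hVe u
    rw [compA, if_neg hu, Pi.smul_apply, smul_eq_mul] at h
    simp only [hw]
    linarith [h]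
  have hkey : ∀ (i : Fin 3) (s : Fin n → Fin 4),
      (lam - 4) * V (Fin.cons i.succ s) = w s + w (starInv 3 i.succ n s) := by
    intro i s
    have := hrel (Fin.cons i.succ s) (by simp [Fin.succ_ne_zero])
    rwa [Fin.cons_zero, Fin.tail_cons] at this
  refine ⟨w, ?_, ?_⟩
  · intro hc
    apply hV0
    funext u
    by_cases h : u 0 = 0
    · have hu : u = Fin.cons 0 (Fin.tail u) := by rw [← h, Fin.cons_self_tail]
      rw [hu]
      exact congrFun hc (Fin.tail u)
    · have := hrel u h
      rw [congrFun hc (Fin.tail u), congrFun hc (starInv 3 (u 0) n (Fin.tail u))] at this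
      simpa [hl4] using this.symm
  · funext t
    rw [adj_mulVec, Pi.smul_apply, smul_eq_mul]
    have h0 := congrFun hVe (Fin.cons 0 t)
    rw [compA] at h0
    simp only [Fin.cons_zero, Fin.tail_cons, eq_self_iff_true, if_true, Pi.smul_apply,
      smul_eq_mul] at h0
    rw [Fin.sum_univ_three] at h0 ⊢
    have k0 := hkey 0 (starWord 3 (0:Fin 3).succ n t)
    have k0' := hkey 0 t
    have k1 := hkey 1 (starWord 3 (1:Fin 3).succ n t)
    have k1' := hkey 1 t
    have k2 := hkey 2 (starWord 3 (2:Fin 3).succ n t)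
    have k2' := hkey 2 t
    rw [starInv_starWord (Fin.succ_ne_zero _)] at k0 k1 k2
    have hwt : V (Fin.cons 0 t) = w t := rfl
    rw [hwt] at h0
    linear_combination (lam - 4) * h0 - k0 - k0' - k1 - k1' - k2 - k2'

lemma specSucc (n : ℕ) :
    Spec (n+1) = insert (4:ℝ) {lam : ℝ | lam ^ 2 - 4 * lam - 6 ∈ Spec n} := by
  ext lam
  simp only [Set.mem_insert_iff, Set.mem_setOf_eq]
  constructor
  · intro h
    by_cases hl : lam = 4
    · exact Or.inl hl
    · exact Or.inr (pre_of_mem hl h)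
  · rintro (rfl | h)
    · exact four_mem n
    · by_cases hl : lam = 4
      · exact hl ▸ four_mem n
      · exact mem_of_pre hl h

noncomputable def gp (mu : ℝ) : ℝ := 2 + Real.sqrt (mu + 10)
noncomputable def gm (mu : ℝ) : ℝ := 2 - Real.sqrt (mu + 10)

lemma preimage_eq {S : Set ℝ} (hS : S ⊆ Set.Icc (-2 : ℝ) 6) :
    {lam : ℝ | lam ^ 2 - 4 * lam - 6 ∈ S} = gp '' S ∪ gm '' S := by
  ext lam
  simp only [Set.mem_setOf_eq, Set.mem_union, Set.mem_image]
  constructor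
  · intro h
    have hnn : (0:ℝ) ≤ lam ^ 2 - 4 * lam - 6 + 10 := by
      have := (hS h).1; nlinarith
    have hsq : Real.sqrt (lam ^ 2 - 4 * lam - 6 + 10) = |lam - 2| := by
      rw [show lam ^ 2 - 4 * lam - 6 + 10 = (lam - 2) ^ 2 by ring, Real.sqrt_sq_eq_abs]
    rcases abs_cases (lam - 2) with ⟨ha, _⟩ | ⟨ha, _⟩
    · exact Or.inl ⟨_, h, by rw [gp, hsq, ha]; ring⟩
    · exact Or.inr ⟨_, h, by rw [gm, hsq, ha]; ring⟩
  · rintro (⟨mu, hmu, rfl⟩ | ⟨mu, hmu, rfl⟩) <;>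
    · have hnn : (0:ℝ) ≤ mu + 10 := by have := (hS hmu).1; linarith
      have hsq := Real.sq_sqrt hnn
      simp only [gp, gm]
      convert hmu using 2
      nlinarith [hsq]

lemma gp_gt {S : Set ℝ} (hS : S ⊆ Set.Icc (-2 : ℝ) 6) {x : ℝ} (hx : x ∈ gp '' S) : 4 < x := by
  obtain ⟨mu, hmu, rfl⟩ := hx
  have h8 : (8:ℝ) ≤ mu + 10 := by have := (hS hmu).1; linarith
  have : (2:ℝ) < Real.sqrt (mu + 10) := by
    have : Real.sqrt 8 ≤ Real.sqrt (mu + 10) := Real.sqrt_le_sqrt h8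
    nlinarith [Real.sq_sqrt (by norm_num : (0:ℝ) ≤ 8), Real.sqrt_nonneg (8:ℝ), this]
  simp only [gp]; linarith

lemma gm_lt {S : Set ℝ} (hS : S ⊆ Set.Icc (-2 : ℝ) 6) {x : ℝ} (hx : x ∈ gm '' S) : x < 0 := by
  obtain ⟨mu, hmu, rfl⟩ := hx
  have h8 : (8:ℝ) ≤ mu + 10 := by have := (hS hmu).1; linarith
  have : (2:ℝ) < Real.sqrt (mu + 10) := by
    have : Real.sqrt 8 ≤ Real.sqrt (mu + 10) := Real.sqrt_le_sqrt h8
    nlinarith [Real.sq_sqrt (by norm_num : (0:ℝ) ≤ 8), Real.sqrt_nonneg (8:ℝ), this]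
  simp only [gm]; linarith

lemma gp_injOn {S : Set ℝ} (hS : S ⊆ Set.Icc (-2 : ℝ) 6) : Set.InjOn gp S := by
  intro a ha b hb h
  have ha' : (0:ℝ) ≤ a + 10 := by have := (hS ha).1; linarith
  have hb' : (0:ℝ) ≤ b + 10 := by have := (hS hb).1; linarith
  have : Real.sqrt (a + 10) = Real.sqrt (b + 10) := by
    simp only [gp] at h; linarith
  have := congrArg (fun x : ℝ => x ^ 2) this
  simp only [Real.sq_sqrt ha', Real.sq_sqrt hb'] at this
  linarith

lemma gm_injOn {S : Set ℝ} (hS : S ⊆ Set.Icc (-2 : ℝ) 6) : Set.InjOn gm S := by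
  intro a ha b hb h
  have ha' : (0:ℝ) ≤ a + 10 := by have := (hS ha).1; linarith
  have hb' : (0:ℝ) ≤ b + 10 := by have := (hS hb).1; linarith
  have : Real.sqrt (a + 10) = Real.sqrt (b + 10) := by
    simp only [gm] at h; linarith
  have := congrArg (fun x : ℝ => x ^ 2) this
  simp only [Real.sq_sqrt ha', Real.sq_sqrt hb'] at this
  linarith

lemma spec_bdd : ∀ n, Spec n ⊆ Set.Icc (-2 : ℝ) 6 := by
  intro n
  induction n with
  | zero => rw [spec0]; rintro x rfl; constructor <;> norm_num
  | succ n ih =>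
    rw [specSucc n, preimage_eq ih]
    rintro x (rfl | hx)
    · constructor <;> norm_num
    rcases hx with hx | hx
    · obtain ⟨mu, hmu, rfl⟩ := hx
      have h1 := (ih hmu).1
      have h2 := (ih hmu).2
      have hs : Real.sqrt (mu + 10) ≤ 4 := by
        rw [show (4:ℝ) = Real.sqrt 16 by rw [show (16:ℝ) = 4^2 by norm_num, Real.sqrt_sq]; norm_num]
        exact Real.sqrt_le_sqrt (by linarith)
      have hs0 := Real.sqrt_nonneg (mu + 10)
      simp only [gp]
      constructor <;> linarith
    · obtain ⟨mu, hmu, rfl⟩ := hx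
      have h1 := (ih hmu).1
      have h2 := (ih hmu).2
      have hs : Real.sqrt (mu + 10) ≤ 4 := by
        rw [show (4:ℝ) = Real.sqrt 16 by rw [show (16:ℝ) = 4^2 by norm_num, Real.sqrt_sq]; norm_num]
        exact Real.sqrt_le_sqrt (by linarith)
      have hs0 := Real.sqrt_nonneg (mu + 10)
      simp only [gm]
      constructor <;> linarith

lemma spec_finite : ∀ n, (Spec n).Finite := by
  intro n
  induction n with
  | zero => rw [spec0]; exact Set.finite_singleton 6
  | succ n ih =>
    rw [specSucc n, preimage_eq (spec_bdd n)]
    exact Set.Finite.insert _ ((ih.image gp).union (ih.image gm))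

lemma spec_card : ∀ n, (Spec n).ncard = 2 ^ (n+1) - 1 := by
  intro n
  induction n with
  | zero => rw [spec0]; simp
  | succ n ih =>
    have hb := spec_bdd n
    have hf := spec_finite n
    rw [specSucc n, preimage_eq hb]
    have hdisj : Disjoint (gp '' Spec n) (gm '' Spec n) := by
      rw [Set.disjoint_left]
      intro x hx hx'
      exact absurd (gm_lt hb hx') (by linarith [gp_gt hb hx])
    have h4 : (4:ℝ) ∉ gp '' Spec n ∪ gm '' Spec n := by
      rintro (hx | hx)
      · exact absurd (gp_gt hb hx) (by norm_num)
      · exact absurd (gm_lt hb hx) (by norm_num)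
    rw [Set.ncard_insert_of_notMem h4 ((hf.image gp).union (hf.image gm)),
      Set.ncard_union_eq hdisj (hf.image gp) (hf.image gm),
      Set.ncard_image_of_injOn (gp_injOn hb), Set.ncard_image_of_injOn (gm_injOn hb), ih]
    have h1 : 1 ≤ 2 ^ (n+1) := Nat.one_le_two_pow
    have : 2 ^ (n + 1 + 1) = 2 * 2 ^ (n+1) := by ring
    omega

/-- For `p = 3` and every `n ≥ 1`, the adjacency matrix `A_n` of the `n`-th Schreier graph
of `𝒢_{S_3}` has exactly `2^{n+1} − 1` distinct real eigenvalues. -/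
theorem stmt11 (n : ℕ) (hn : 1 ≤ n) :
    Set.ncard {lam : ℝ | ∃ v : (Fin n → Fin 4) → ℝ,
        v ≠ 0 ∧ (starAdj 3 n).mulVec v = lam • v} = 2 ^ (n + 1) - 1 :=
  spec_card n
end

section
/- Fix an integer p ≥ 1, i ∈ {1,…,p}, n ≥ 0 and u ∈ X^n. Let m be the largest integer 0 ≤ m ≤ n such that the first m letters of u all lie in {0,i}. Then the orbit of u under the cyclic group generated by the permutation e_i^{(n)} equals { v ∈ X^n : v_j ∈ {0,i} for all 1 ≤ j ≤ m, and v_j = u_j for all m < j ≤ n }; in particular this orbit has exactly 2^m elements. -/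
/-! On words starting with `0` or `i`, the generator `e_i` swaps that first letter between `0`
and `i`, and `e_i²` keeps it while acting as `e_i` on the remaining letters. By induction on the
length, `e_i^{2^m}` fixes `u`, and from `u` one reaches every word with an arbitrary letter of
`{0, i}` in front of a word in the orbit of the tail of `u`. Conversely `e_i` stops at the first
letter outside `{0, i}`, so it never changes the letters from position `m` on. The orbit is
therefore the product `{0, i}^m × {(u_{m+1}, …, u_n)}`, of size `2^m`. -/

def starCylinder (p : ℕ) (i : Fin (p + 1)) (n m : ℕ) (u : Fin n → Fin (p + 1)) :
    Set (Fin n → Fin (p + 1)) :=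
  {v | (∀ j : Fin n, (j : ℕ) < m → v j = 0 ∨ v j = i) ∧ (∀ j : Fin n, m ≤ (j : ℕ) → v j = u j)}

section

variable {p : ℕ} {i : Fin (p + 1)}

theorem mem_starCylinder_zero {n : ℕ} {u v : Fin n → Fin (p + 1)} :
    v ∈ starCylinder p i n 0 u ↔ v = u := by
  simp [starCylinder, funext_iff]

theorem mem_starCylinder_succ {n m : ℕ} {u v : Fin (n + 1) → Fin (p + 1)} :
    v ∈ starCylinder p i (n + 1) (m + 1) u ↔
      (v 0 = 0 ∨ v 0 = i) ∧ Fin.tail v ∈ starCylinder p i n m (Fin.tail u) := by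
  simp [starCylinder, Fin.forall_fin_succ, Fin.tail, and_assoc]

theorem starWord_cons_zero {n : ℕ} (w : Fin n → Fin (p + 1)) :
    starWord p i (n + 1) (Fin.cons 0 w) = Fin.cons i (starWord p i n w) := by
  simp [starWord]

theorem starWord_cons_self (hi : i ≠ 0) {n : ℕ} (w : Fin n → Fin (p + 1)) :
    starWord p i (n + 1) (Fin.cons i w) = Fin.cons 0 w := by
  simp [starWord, hi]

theorem starWord_eq_self {n : ℕ} {v : Fin (n + 1) → Fin (p + 1)} (hv : ¬(v 0 = 0 ∨ v 0 = i)) :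
    starWord p i (n + 1) v = v := by
  rw [not_or] at hv
  simp [starWord, hv.1, hv.2]

theorem starWord_starWord_cons (hi : i ≠ 0) {n : ℕ} {x : Fin (p + 1)} (hx : x = 0 ∨ x = i)
    (w : Fin n → Fin (p + 1)) :
    starWord p i (n + 1) (starWord p i (n + 1) (Fin.cons x w)) = Fin.cons x (starWord p i n w) := by
  rcases hx with rfl | rfl
  · rw [starWord_cons_zero, starWord_cons_self hi]
  · rw [starWord_cons_self hi, starWord_cons_zero]

theorem starWord_iterate_two_mul_cons (hi : i ≠ 0) {n : ℕ} {x : Fin (p + 1)} (hx : x = 0 ∨ x = i)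
    (w : Fin n → Fin (p + 1)) (t : ℕ) :
    (starWord p i (n + 1))^[2 * t] (Fin.cons x w) = Fin.cons x ((starWord p i n)^[t] w) := by
  have h : Function.Semiconj (Fin.cons x) (starWord p i n) (starWord p i (n + 1))^[2] :=
    fun w => (starWord_starWord_cons hi hx w).symm
  rw [Function.iterate_mul, (h.iterate_right t).eq]

theorem starWord_mapsTo_starCylinder (hi : i ≠ 0) {n m : ℕ} {u : Fin n → Fin (p + 1)}
    (hstop : ∀ h : m < n, ¬(u ⟨m, h⟩ = 0 ∨ u ⟨m, h⟩ = i)) :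
    Set.MapsTo (starWord p i n) (starCylinder p i n m u) (starCylinder p i n m u) := by
  induction n generalizing m with
  | zero => exact fun v _ => by simp [starCylinder]
  | succ n ih =>
    intro v hv
    cases m with
    | zero =>
      rw [mem_starCylinder_zero] at hv ⊢
      subst hv
      exact starWord_eq_self (hstop (Nat.succ_pos n))
    | succ m =>
      rw [mem_starCylinder_succ] at hv
      obtain ⟨hv0, hvt⟩ := hv
      rw [← Fin.cons_self_tail v]
      rcases hv0 with hv0 | hv0
      · rw [hv0, starWord_cons_zero, mem_starCylinder_succ]
        simpa using ih (fun h => hstop (Nat.succ_lt_succ h)) hvt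
      · rw [hv0, starWord_cons_self hi, mem_starCylinder_succ]
        simpa using hvt

theorem isPeriodicPt_starWord_two_pow (hi : i ≠ 0) {n m : ℕ} {u : Fin n → Fin (p + 1)}
    (hu : u ∈ starCylinder p i n m u) (hstop : ∀ h : m < n, ¬(u ⟨m, h⟩ = 0 ∨ u ⟨m, h⟩ = i)) :
    Function.IsPeriodicPt (starWord p i n) (2 ^ m) u := by
  induction n generalizing m with
  | zero => exact .of_subsingleton _ _ _
  | succ n ih =>
    cases m with
    | zero => exact starWord_eq_self (hstop (Nat.succ_pos n))
    | succ m =>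
      obtain ⟨hu0, hut⟩ := mem_starCylinder_succ.1 hu
      have htail := ih hut fun h => hstop (Nat.succ_lt_succ h)
      rw [Function.IsPeriodicPt, Function.IsFixedPt, ← Fin.cons_self_tail u, pow_succ',
        starWord_iterate_two_mul_cons hi hu0, htail.eq]

theorem exists_iterate_eq_of_mem_starCylinder (hi : i ≠ 0) {n m : ℕ} {u v : Fin n → Fin (p + 1)}
    (hu : u ∈ starCylinder p i n m u) (hstop : ∀ h : m < n, ¬(u ⟨m, h⟩ = 0 ∨ u ⟨m, h⟩ = i))
    (hv : v ∈ starCylinder p i n m u) : ∃ t, (starWord p i n)^[t] u = v := by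
  induction n generalizing m with
  | zero => exact ⟨0, Subsingleton.elim _ _⟩
  | succ n ih =>
    cases m with
    | zero => exact ⟨0, (mem_starCylinder_zero.1 hv).symm⟩
    | succ m =>
      cases u using Fin.consCases with | cons x w =>
      cases v using Fin.consCases with | cons y w' =>
      simp only [mem_starCylinder_succ, Fin.cons_zero, Fin.tail_cons] at hu hv
      have hstop' : ∀ h : m < n, ¬(w ⟨m, h⟩ = 0 ∨ w ⟨m, h⟩ = i) :=
        fun h => hstop (Nat.succ_lt_succ h)
      obtain ⟨t, rfl⟩ := ih hu.2 hstop' hv.2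
      obtain ⟨k, hk⟩ : ∃ k, 2 ^ m = k + 1 := Nat.exists_eq_add_one.2 (Nat.two_pow_pos m)
      have hper : (starWord p i n)^[t + k + 1] w = (starWord p i n)^[t] w := by
        rw [add_assoc, ← hk, Function.iterate_add_apply,
          (isPeriodicPt_starWord_two_pow hi hu.2 hstop').eq]
      rcases hu.1 with rfl | rfl <;> rcases hv.1 with rfl | rfl
      · exact ⟨2 * t, starWord_iterate_two_mul_cons hi (.inl rfl) w t⟩
      · -- `e (0·z) = i·(e z)`: reach `i·(e^[t] w)` through `e^[t] w = e (e^[t + k] w)`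
        refine ⟨2 * (t + k) + 1, ?_⟩
        rw [Function.iterate_succ_apply', starWord_iterate_two_mul_cons hi (.inl rfl),
          starWord_cons_zero, ← Function.iterate_succ_apply' (starWord p _ n), hper]
      · refine ⟨2 * t + 1, ?_⟩
        rw [Function.iterate_succ_apply', starWord_iterate_two_mul_cons hi (.inr rfl),
          starWord_cons_self hi]
      · exact ⟨2 * t, starWord_iterate_two_mul_cons hi (.inr rfl) w t⟩

theorem setOf_iterate_eq_starCylinder (hi : i ≠ 0) {n m : ℕ} {u : Fin n → Fin (p + 1)}
    (hu : u ∈ starCylinder p i n m u) (hstop : ∀ h : m < n, ¬(u ⟨m, h⟩ = 0 ∨ u ⟨m, h⟩ = i)) :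
    {v | ∃ t, (starWord p i n)^[t] u = v} = starCylinder p i n m u := by
  ext v
  constructor
  · rintro ⟨t, rfl⟩
    exact (starWord_mapsTo_starCylinder hi hstop).iterate t hu
  · exact exists_iterate_eq_of_mem_starCylinder hi hu hstop

theorem starCylinder_eq_piFinset (n m : ℕ) (u : Fin n → Fin (p + 1)) :
    starCylinder p i n m u =
      Fintype.piFinset fun j : Fin n => if (j : ℕ) < m then {0, i} else {u j} := by
  ext v
  simp only [starCylinder, Set.mem_ofPred_eq, Finset.mem_coe, Fintype.mem_piFinset, ← forall_and]
  refine forall_congr' fun j => ?_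
  split_ifs with hj
  · simp [hj]
  · simp [hj, not_lt.1 hj]

theorem ncard_starCylinder (hi : i ≠ 0) {n m : ℕ} (hmn : m ≤ n) (u : Fin n → Fin (p + 1)) :
    (starCylinder p i n m u).ncard = 2 ^ m := by
  rw [starCylinder_eq_piFinset, Set.ncard_coe_finset, Fintype.card_piFinset]
  simp [apply_ite, Finset.card_pair hi.symm, Finset.prod_ite, Fin.card_filter_val_lt, hmn]

end

theorem stmt15_general (p : ℕ) (i : Fin (p + 1)) (hi : i ≠ 0) (n : ℕ)
    (u : Fin n → Fin (p + 1)) (m : ℕ) (hmn : m ≤ n)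
    (h1 : ∀ j : Fin n, (j : ℕ) < m → u j = 0 ∨ u j = i)
    (h2 : ∀ h : m < n, ¬(u ⟨m, h⟩ = 0 ∨ u ⟨m, h⟩ = i)) :
    ({v : Fin n → Fin (p + 1) | ∃ t : ℕ, (starWord p i n)^[t] u = v} =
      {v : Fin n → Fin (p + 1) |
        (∀ j : Fin n, (j : ℕ) < m → v j = 0 ∨ v j = i) ∧
        (∀ j : Fin n, m ≤ (j : ℕ) → v j = u j)}) ∧
    Set.ncard {v : Fin n → Fin (p + 1) | ∃ t : ℕ, (starWord p i n)^[t] u = v} = 2 ^ m := by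
  have hu : u ∈ starCylinder p i n m u := ⟨h1, fun _ _ => rfl⟩
  rw [setOf_iterate_eq_starCylinder hi hu h2]
  exact ⟨rfl, ncard_starCylinder hi hmn u⟩

/-- Let `m ≤ n` be the largest integer such that the first `m` letters of `u` all lie in
`{0, i}`. Then the orbit of `u` under the cyclic group generated by `e_i^{(n)}` is the set
of words agreeing with `u` from position `m` on and with arbitrary letters in `{0, i}`
before; in particular it has exactly `2^m` elements. -/
theorem stmt15 (p : ℕ) (hp : 1 ≤ p) (i : Fin (p + 1)) (hi : i ≠ 0) (n : ℕ)
    (u : Fin n → Fin (p + 1)) (m : ℕ) (hmn : m ≤ n)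
    (h1 : ∀ j : Fin n, (j : ℕ) < m → u j = 0 ∨ u j = i)
    (h2 : ∀ h : m < n, ¬(u ⟨m, h⟩ = 0 ∨ u ⟨m, h⟩ = i)) :
    ({v : Fin n → Fin (p + 1) | ∃ t : ℕ, (starWord p i n)^[t] u = v} =
      {v : Fin n → Fin (p + 1) |
        (∀ j : Fin n, (j : ℕ) < m → v j = 0 ∨ v j = i) ∧
        (∀ j : Fin n, m ≤ (j : ℕ) → v j = u j)}) ∧
    Set.ncard {v : Fin n → Fin (p + 1) | ∃ t : ℕ, (starWord p i n)^[t] u = v} = 2 ^ m :=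
  stmt15_general p i hi n u m hmn h1 h2
end

section
/- Fix an integer p ≥ 1, i ∈ {1,…,p}, n ≥ 1, and an integer t with 1 ≤ t ≤ 2^n − 1. Then (e_i^{(n)})^t(0^n) is a word of the form 0^k·i·v with 0 ≤ k ≤ n−1 and v ∈ {0,i}^{n−k−1}, and (e_i^{(n)})^{2^n − t}(0^n) = 0^k·i·v′, where v′ ∈ {0,i}^{n−k−1} is the word obtained from v by exchanging every letter 0 with i and every letter i with 0. -/
lemma starWord_dec (p : ℕ) (i : Fin (p + 1)) (hi : i ≠ 0) :
    ∀ (n m : ℕ), starWord p i n (fun j => if (m + 1).testBit (j : ℕ) then i else 0) =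
      fun j : Fin n => if m.testBit (j : ℕ) then i else 0 := by
  intro n
  induction n with
  | zero => intro m; funext j; exact absurd j.isLt (by omega)
  | succ n ih =>
    intro m
    rcases Nat.even_or_odd m with he | ho
    · -- m even, m+1 odd : first bit is i, flip it to 0
      have hm2 : m % 2 = 0 := Nat.even_iff.mp he
      have h0 : (m + 1).testBit 0 = true := by
        simp [Nat.testBit_zero]; omega
      show (if _ then _ else _) = _
      rw [show (fun j : Fin (n+1) => if (m + 1).testBit (j : ℕ) then i else 0) 0 =
            i by simp [h0]]
      rw [if_neg hi, if_pos rfl]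
      funext j
      refine Fin.cases ?_ (fun j' => ?_) j
      · have hb : m.testBit 0 = false := by simp [Nat.testBit_zero]; omega
        simp [hb]
      · simp only [Fin.cons_succ, Fin.tail, Fin.val_succ, Nat.testBit_add_one]
        have : (m + 1) / 2 = m / 2 := by omega
        rw [this]
    · -- m odd, m+1 even : first bit 0 ↦ i, carry to tail
      have hm2 : m % 2 = 1 := Nat.odd_iff.mp ho
      have h0 : (m + 1).testBit 0 = false := by
        simp [Nat.testBit_zero]; omega
      show (if _ then _ else _) = _
      rw [show (fun j : Fin (n+1) => if (m + 1).testBit (j : ℕ) then i else 0) 0 =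
            0 by simp [h0]]
      rw [if_pos rfl]
      have htail : (Fin.tail fun j : Fin (n+1) => if (m + 1).testBit (j : ℕ) then i else 0) =
          fun j : Fin n => if (m / 2 + 1).testBit (j : ℕ) then i else 0 := by
        funext j
        simp only [Fin.tail, Fin.val_succ, Nat.testBit_add_one]
        have h2 : (m + 1) / 2 = m / 2 + 1 := by omega
        rw [h2]
      rw [htail, ih (m / 2)]
      funext j
      refine Fin.cases ?_ (fun j' => ?_) j
      · have hb : m.testBit 0 = true := by simp [Nat.testBit_zero, hm2]
        simp [hb]
      · simp only [Fin.cons_succ, Fin.val_succ, Nat.testBit_add_one]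

lemma starWord_zero (p : ℕ) (i : Fin (p + 1)) :
    ∀ n, starWord p i n (fun _ => 0) = fun _ : Fin n => i := by
  intro n
  induction n with
  | zero => funext j; exact absurd j.isLt (by omega)
  | succ n ih =>
    show (if _ then _ else _) = _
    rw [if_pos rfl]
    have : (Fin.tail fun _ : Fin (n+1) => (0 : Fin (p+1))) = fun _ : Fin n => 0 := rfl
    rw [this, ih]
    funext j
    refine Fin.cases ?_ (fun j' => ?_) j <;> simp

lemma starWord_iter (p : ℕ) (i : Fin (p + 1)) (hi : i ≠ 0) (n : ℕ) :
    ∀ (s m : ℕ), (starWord p i n)^[s] (fun j => if (m + s).testBit (j : ℕ) then i else 0) =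
      fun j : Fin n => if m.testBit (j : ℕ) then i else 0 := by
  intro s
  induction s with
  | zero => intro m; simp
  | succ s ih =>
    intro m
    rw [Function.iterate_succ_apply]
    have : (fun j : Fin n => if (m + (s + 1)).testBit (j : ℕ) then i else 0) =
        fun j : Fin n => if ((m + s) + 1).testBit (j : ℕ) then i else 0 := rfl
    rw [this, starWord_dec p i hi n (m + s)]
    exact ih m

lemma bits_compl (n a b : ℕ) (ha : 1 ≤ a) (hb : 1 ≤ b) (hab : a + b = 2 ^ n) :
    ∃ k, k < n ∧ (∀ j, j < k → a.testBit j = false ∧ b.testBit j = false) ∧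
      a.testBit k = true ∧ b.testBit k = true ∧
      ∀ j, k < j → j < n → b.testBit j = !a.testBit j := by
  obtain ⟨k, c, hc2, hac⟩ :=
    Nat.exists_eq_pow_mul_and_not_dvd (show a ≠ 0 by omega) 2 (by norm_num)
  have hcodd : c % 2 = 1 := by omega
  have hc1 : 1 ≤ c := by omega
  have hklt : k < n := by
    have h1 : 2 ^ k ≤ a := by
      rw [hac]; exact Nat.le_mul_of_pos_right _ (by omega)
    have h2 : 2 ^ k < 2 ^ n := by omega
    exact (Nat.pow_lt_pow_iff_right (by norm_num)).mp h2
  set m := n - k with hmdef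
  have hm1 : 1 ≤ m := by omega
  have hkm : k + m = n := by omega
  have hpow : 2 ^ k * 2 ^ m = 2 ^ n := by rw [← pow_add, hkm]
  have hc_lt : c < 2 ^ m := by
    have : 2 ^ k * c < 2 ^ k * 2 ^ m := by omega
    exact Nat.lt_of_mul_lt_mul_left this
  set d := 2 ^ m - c with hddef
  have hd1 : 1 ≤ d := by omega
  have hbd : b = 2 ^ k * d := by
    have h2 : 2 ^ k * c + 2 ^ k * d = 2 ^ n := by
      rw [← Nat.mul_add, show c + d = 2 ^ m from by omega, hpow]
    omega
  have hdodd : d % 2 = 1 := by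
    have h2 : (2 : ℕ) ∣ 2 ^ m := dvd_pow_self 2 (by omega)
    omega
  have ha_bit : ∀ j, a.testBit j = (decide (k ≤ j) && c.testBit (j - k)) := by
    intro j
    have : a = c <<< k := by rw [Nat.shiftLeft_eq, hac, Nat.mul_comm]
    rw [this, Nat.testBit_shiftLeft]
  have hb_bit : ∀ j, b.testBit j = (decide (k ≤ j) && d.testBit (j - k)) := by
    intro j
    have : b = d <<< k := by rw [Nat.shiftLeft_eq, hbd, Nat.mul_comm]
    rw [this, Nat.testBit_shiftLeft]
  have hc0 : c.testBit 0 = true := by simp [Nat.testBit_zero, hcodd]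
  have hd0 : d.testBit 0 = true := by simp [Nat.testBit_zero, hdodd]
  have hcompl : ∀ r, 1 ≤ r → r < m → d.testBit r = !c.testBit r := by
    intro r hr1 hrm
    have hd' : d = 2 ^ m - ((c - 1) + 1) := by omega
    rw [hd', Nat.testBit_two_pow_sub_succ (show c - 1 < 2 ^ m by omega)]
    have hcc : (c - 1).testBit r = c.testBit r := by
      obtain ⟨r', rfl⟩ : ∃ r', r = r' + 1 := ⟨r - 1, by omega⟩
      rw [Nat.testBit_add_one, Nat.testBit_add_one, show (c - 1) / 2 = c / 2 from by omega]
    simp [hcc, hrm]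
  refine ⟨k, hklt, ?_, ?_, ?_, ?_⟩
  · intro j hj
    rw [ha_bit, hb_bit]
    simp [Nat.not_le.mpr hj]
  · rw [ha_bit]; simp [hc0]
  · rw [hb_bit]; simp [hd0]
  · intro j hkj hjn
    rw [ha_bit, hb_bit, hcompl (j - k) (by omega) (by omega)]
    simp [Nat.le_of_lt hkj]

/-- For `1 ≤ t ≤ 2^n − 1`, the word `(e_i^{(n)})^t(0^n)` has the form `0^k·i·v` with
`v ∈ {0,i}^{n−k−1}`, and `(e_i^{(n)})^{2^n − t}(0^n) = 0^k·i·v′`, where `v′` is obtained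
from `v` by exchanging the letters `0` and `i`. -/
theorem stmt16 (p : ℕ) (hp : 1 ≤ p) (i : Fin (p + 1)) (hi : i ≠ 0) (n : ℕ) (hn : 1 ≤ n)
    (t : ℕ) (ht1 : 1 ≤ t) (ht2 : t ≤ 2 ^ n - 1) :
    ∃ (k : ℕ) (hk : k < n),
      (∀ j : Fin n, (j : ℕ) < k →
        (starWord p i n)^[t] (fun _ => 0) j = 0) ∧
      (starWord p i n)^[t] (fun _ => 0) ⟨k, hk⟩ = i ∧
      (∀ j : Fin n, k < (j : ℕ) →
        ((starWord p i n)^[t] (fun _ => 0) j = 0 ∨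
         (starWord p i n)^[t] (fun _ => 0) j = i)) ∧
      (∀ j : Fin n, (j : ℕ) < k →
        (starWord p i n)^[2 ^ n - t] (fun _ => 0) j = 0) ∧
      (starWord p i n)^[2 ^ n - t] (fun _ => 0) ⟨k, hk⟩ = i ∧
      (∀ j : Fin n, k < (j : ℕ) →
        (starWord p i n)^[2 ^ n - t] (fun _ => 0) j =
          if (starWord p i n)^[t] (fun _ => 0) j = 0 then i else 0) := by
  have h2n : 1 ≤ 2 ^ n := Nat.one_le_two_pow
  set a := 2 ^ n - t with hadef
  set b := t with hbdef
  have hab : a + b = 2 ^ n := by omega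
  have key : ∀ s x : ℕ, 1 ≤ s → s + x = 2 ^ n →
      (starWord p i n)^[s] (fun _ => 0) =
        fun j : Fin n => if x.testBit (j : ℕ) then i else 0 := by
    intro s x hs hsx
    have hs' : s = (s - 1) + 1 := by omega
    rw [hs', Function.iterate_succ_apply, starWord_zero p i n]
    have hconst : (fun _ : Fin n => i) =
        fun j : Fin n => if (x + (s - 1)).testBit (j : ℕ) then i else 0 := by
      funext j
      rw [show x + (s - 1) = 2 ^ n - 1 from by omega]
      simp [Nat.testBit_two_pow_sub_one, j.isLt]
    rw [hconst, starWord_iter p i hi n (s - 1) x]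
  have W1 : (starWord p i n)^[t] (fun _ => 0) =
      fun j : Fin n => if a.testBit (j : ℕ) then i else 0 := key t a ht1 (by omega)
  have W2 : (starWord p i n)^[2 ^ n - t] (fun _ => 0) =
      fun j : Fin n => if b.testBit (j : ℕ) then i else 0 := key (2 ^ n - t) b (by omega) (by omega)
  obtain ⟨k, hk, hlow, hak, hbk, hcompl⟩ := bits_compl n a b (by omega) (by omega) hab
  refine ⟨k, hk, ?_, ?_, ?_, ?_, ?_, ?_⟩
  · intro j hj; rw [W1]; simp [(hlow j hj).1]
  · rw [W1]; simp [hak]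
  · intro j hj; rw [W1]
    by_cases h : a.testBit (j : ℕ) <;> simp [h]
  · intro j hj; rw [W2]; simp [(hlow j hj).2]
  · rw [W2]; simp [hbk]
  · intro j hj
    rw [W1, W2]
    have hc := hcompl (j : ℕ) hj j.isLt
    by_cases h : a.testBit (j : ℕ) <;>
      simp only [h, Bool.not_true, Bool.not_false] at hc ⊢ <;> simp [hc, hi]
end
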